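/- arXiv:2003.07204 — 3 statements merged into one kernel-verified Lean document; each statement's English description precedes it below -/
import Mathlib

section
/- Let a be a positive integer and Δ a non-zero integer. Then the set of integers b satisfying b² ≡ Δ (mod a) is a union of at most 2^(ω(a/gcd(a,Δ))+1) residue classes modulo a/gcd₂(a,Δ), where ω(n) denotes the number of distinct prime divisors of n and gcd₂(a,Δ) denotes the largest positive integer d such that d² | a and d² | Δ. -/
open Finset

def sqW (c : ℤ) (p : ℕ) : ℕ := if (p : ℤ) ∣ c then 0 else if p = 2 then 2 else 1

lemma zmod_sq_dvd (n : ℕ) [NeZero n] (c : ℤ) (x : ZMod n) (h : x ^ 2 = (c : ZMod n)) :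
    (n : ℤ) ∣ (x.val : ℤ) ^ 2 - c := by
  have h0 : (((x.val : ℤ) ^ 2 - c : ℤ) : ZMod n) = 0 := by
    push_cast
    rw [ZMod.natCast_val, ZMod.cast_id, h, sub_self]
  exact (ZMod.intCast_zmod_eq_zero_iff_dvd _ _).mp h0

lemma val_int_cast_eq (n : ℕ) [NeZero n] (x : ZMod n) :
    (((x.val : ℤ)) : ZMod n) = x := by
  push_cast
  rw [ZMod.natCast_val, ZMod.cast_id]

lemma sq_count_pp (p k : ℕ) (hp : p.Prime) (hk : 0 < k) (c : ℤ)
    (H : ¬(p ^ 2 ∣ p ^ k ∧ (p : ℤ) ^ 2 ∣ c)) :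
    Nat.card {x : ZMod (p ^ k) // x ^ 2 = (c : ZMod (p ^ k))} ≤ 2 ^ (sqW c p) := by
  haveI : NeZero (p ^ k) := ⟨(pow_pos hp.pos k).ne'⟩
  have hcard : Nat.card {x : ZMod (p ^ k) // x ^ 2 = (c : ZMod (p ^ k))}
      = ({x : ZMod (p ^ k) | x ^ 2 = (c : ZMod (p ^ k))}).ncard :=
    Nat.card_coe_set_eq _
  rw [hcard]
  set S : Set (ZMod (p ^ k)) := {x | x ^ 2 = (c : ZMod (p ^ k))} with hSdef
  have hdvd : ∀ x ∈ S, ((p : ℤ)) ^ k ∣ (x.val : ℤ) ^ 2 - c := by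
    intro x hx
    have := zmod_sq_dvd (p ^ k) c x hx
    push_cast at this
    exact this
  by_cases hpc : (p : ℤ) ∣ c
  · rw [sqW, if_pos hpc, pow_zero]
    rcases eq_or_lt_of_le (Nat.one_le_iff_ne_zero.mpr hk.ne') with hk1 | hk2
    · -- k = 1 : at most the solution 0
      obtain rfl : k = 1 := hk1.symm
      have hsub : S ⊆ {0} := by
        intro x hx
        have h1 : (p : ℤ) ∣ (x.val : ℤ) ^ 2 - c := by
          have := hdvd x hx
          rwa [pow_one] at this
        have h2 : (p : ℤ) ∣ (x.val : ℤ) ^ 2 := by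
          have := dvd_add h1 hpc
          simpa using this
        have h3 : (p : ℤ) ∣ (x.val : ℤ) := (Nat.prime_iff_prime_int.mp hp).dvd_of_dvd_pow h2
        have h4 : p ∣ x.val := by exact_mod_cast h3
        have h5 : p ^ 1 ∣ x.val := by simpa using h4
        have h6 : x.val = 0 := Nat.eq_zero_of_dvd_of_lt h5 (ZMod.val_lt x)
        have : x = 0 := (ZMod.val_eq_zero x).mp h6
        simpa using this
      calc S.ncard ≤ ({0} : Set (ZMod (p ^ 1))).ncard :=
            Set.ncard_le_ncard hsub (Set.finite_singleton _)
        _ = 1 := Set.ncard_singleton _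
    · -- k ≥ 2 : no solutions
      have hc2 : ¬ (p : ℤ) ^ 2 ∣ c := fun h => H ⟨pow_dvd_pow p hk2, h⟩
      have hempty : S = ∅ := by
        ext x
        simp only [Set.mem_empty_iff_false, iff_false]
        intro hx
        have h1 : (p : ℤ) ^ 2 ∣ (x.val : ℤ) ^ 2 - c :=
          dvd_trans (pow_dvd_pow _ hk2) (hdvd x hx)
        have h2 : (p : ℤ) ∣ (x.val : ℤ) ^ 2 := by
          have := dvd_add (dvd_trans (dvd_pow_self (p:ℤ) two_ne_zero) h1) hpc
          simpa using this
        have h3 : (p : ℤ) ∣ (x.val : ℤ) := (Nat.prime_iff_prime_int.mp hp).dvd_of_dvd_pow h2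
        have h4 : (p : ℤ) ^ 2 ∣ (x.val : ℤ) ^ 2 := pow_dvd_pow_of_dvd h3 2
        exact hc2 (by simpa using dvd_sub h4 h1)
      rw [hempty]
      simp
  · -- p does not divide c
    rcases S.eq_empty_or_nonempty with hE | ⟨x₀, hx₀⟩
    · rw [hE]; simp
    have hprod : ∀ x ∈ S,
        (p : ℤ) ^ k ∣ ((x.val : ℤ) - (x₀.val : ℤ)) * ((x.val : ℤ) + (x₀.val : ℤ)) := by
      intro x hx
      have h1 := hdvd x hx
      have h2 := hdvd x₀ hx₀
      have : ((x.val : ℤ) - (x₀.val : ℤ)) * ((x.val : ℤ) + (x₀.val : ℤ))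
          = ((x.val : ℤ) ^ 2 - c) - ((x₀.val : ℤ) ^ 2 - c) := by ring
      rw [this]
      exact dvd_sub h1 h2
    have hnd : ∀ x ∈ S, ¬ (p : ℤ) ∣ (x.val : ℤ) := by
      intro x hx hcon
      apply hpc
      have h1 : (p : ℤ) ∣ (x.val : ℤ) ^ 2 - c :=
        dvd_trans (dvd_pow_self (p:ℤ) hk.ne') (hdvd x hx)
      have h2 : (p : ℤ) ∣ (x.val : ℤ) ^ 2 := dvd_pow hcon two_ne_zero
      simpa using dvd_sub h2 h1
    have cast_sub_eq : ∀ x : ZMod (p ^ k),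
        (((x.val : ℤ) - (x₀.val : ℤ) : ℤ) : ZMod (p ^ k)) = x - x₀ := by
      intro x
      push_cast
      rw [ZMod.natCast_val, ZMod.cast_id, ZMod.natCast_val, ZMod.cast_id]
    have cast_add_eq : ∀ x : ZMod (p ^ k),
        (((x.val : ℤ) + (x₀.val : ℤ) : ℤ) : ZMod (p ^ k)) = x + x₀ := by
      intro x
      push_cast
      rw [ZMod.natCast_val, ZMod.cast_id, ZMod.natCast_val, ZMod.cast_id]
    by_cases hp2 : p = 2
    · -- p = 2 : at most 4 solutions
      subst hp2
      rw [sqW, if_neg hpc, if_pos rfl]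
      rcases le_or_gt k 2 with hk2 | hk3
      · have hle : S.ncard ≤ Nat.card (ZMod (2 ^ k)) := by
          have := Set.ncard_le_ncard (Set.subset_univ S) Set.finite_univ
          rwa [Set.ncard_univ] at this
        calc S.ncard ≤ Nat.card (ZMod (2 ^ k)) := hle
          _ = 2 ^ k := Nat.card_zmod _
          _ ≤ 2 ^ 2 := Nat.pow_le_pow_right (by norm_num) hk2
      · -- k ≥ 3
        have hk1 : k - 1 + 1 = k := Nat.succ_pred_eq_of_pos hk
        have hk2' : k - 2 + 2 = k := by omega
        set h2 : ZMod (2 ^ k) := ((2 ^ (k - 1) : ℕ) : ZMod (2 ^ k)) with hh2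
        have h2two : (2 : ZMod (2 ^ k)) * h2 = 0 := by
          have hz : ((2 ^ k : ℕ) : ZMod (2 ^ k)) = 0 := ZMod.natCast_self _
          push_cast at hz
          rw [hh2]
          push_cast
          rw [← pow_succ', hk1]
          exact hz
        have key2 : ∀ z : ℤ, (2:ℤ) ^ (k-1) ∣ z →
            (((z : ℤ) : ZMod (2 ^ k)) = 0 ∨ ((z : ℤ) : ZMod (2 ^ k)) = h2) := by
          intro z hz
          obtain ⟨s, rfl⟩ := hz
          have hc : ((((2:ℤ) ^ (k-1) * s) : ℤ) : ZMod (2 ^ k))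
              = h2 * ((s : ℤ) : ZMod (2 ^ k)) := by
            rw [hh2]; push_cast; ring
          rcases Int.even_or_odd s with ⟨m, rfl⟩ | ⟨m, rfl⟩
          · left
            rw [hc]
            push_cast
            have : h2 * (((m : ℤ) : ZMod (2 ^ k)) + ((m : ℤ) : ZMod (2 ^ k)))
                = (2 * h2) * ((m : ℤ) : ZMod (2 ^ k)) := by ring
            rw [this, h2two, zero_mul]
          · right
            rw [hc]
            push_cast
            have : h2 * ((2 : ZMod (2 ^ k)) * ((m : ℤ) : ZMod (2 ^ k)) + 1)
                = (2 * h2) * ((m : ℤ) : ZMod (2 ^ k)) + h2 := by ring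
            rw [this, h2two, zero_mul, zero_add]
        have hsub : S ⊆ {x₀, x₀ + h2, -x₀, -x₀ + h2} := by
          intro x hx
          have hX : ¬ (2:ℤ) ∣ (x.val : ℤ) := by
            have := hnd x hx; push_cast at this; exact this
          have hY : ¬ (2:ℤ) ∣ (x₀.val : ℤ) := by
            have := hnd x₀ hx₀; push_cast at this; exact this
          have hXodd : Odd ((x.val : ℤ)) := Int.not_even_iff_odd.mp
            (fun h => hX h.two_dvd)
          have hYodd : Odd ((x₀.val : ℤ)) := Int.not_even_iff_odd.mp
            (fun h => hY h.two_dvd)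
          obtain ⟨u, hu⟩ := hXodd.sub_odd hYodd
          obtain ⟨v, hv⟩ := hXodd.add_odd hYodd
          have hprod' : (2:ℤ) ^ k ∣ ((x.val : ℤ) - (x₀.val : ℤ)) * ((x.val : ℤ) + (x₀.val : ℤ)) := by
            have := hprod x hx; push_cast at this; exact this
          have huv : (2:ℤ) ^ (k-2) ∣ u * v := by
            have h4 : (2:ℤ) ^ k = (2:ℤ) ^ (k-2) * 4 := by
              have hpa := pow_add (2:ℤ) (k-2) 2
              rw [hk2'] at hpa
              rw [hpa]; norm_num
            have heq : ((x.val : ℤ) - (x₀.val : ℤ)) * ((x.val : ℤ) + (x₀.val : ℤ))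
                = 4 * (u * v) := by rw [hu, hv]; ring
            rw [heq, h4, mul_comm ((2:ℤ) ^ (k-2)) 4] at hprod'
            exact (mul_dvd_mul_iff_left (by norm_num : (4:ℤ) ≠ 0)).mp hprod'
          have hnotboth : ¬ ((2:ℤ) ∣ u ∧ (2:ℤ) ∣ v) := by
            rintro ⟨h1, h2'⟩
            apply hX
            have : (2:ℤ) ∣ u + v := dvd_add h1 h2'
            have heq : u + v = (x.val : ℤ) := by omega
            rwa [heq] at this
          rw [not_and_or] at hnotboth
          have hmain : (2:ℤ) ^ (k-1) ∣ ((x.val : ℤ) - (x₀.val : ℤ)) ∨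
              (2:ℤ) ^ (k-1) ∣ ((x.val : ℤ) + (x₀.val : ℤ)) := by
            have hp2' : Prime (2 : ℤ) := Int.prime_two
            rcases hnotboth with hA | hB
            · right
              have hcop : IsCoprime ((2:ℤ) ^ (k-2)) u :=
                ((hp2'.coprime_iff_not_dvd).mpr hA).pow_left
              have : (2:ℤ) ^ (k-2) ∣ v := hcop.dvd_of_dvd_mul_left huv
              have : (2:ℤ) * ((2:ℤ) ^ (k-2)) ∣ 2 * v := mul_dvd_mul_left 2 this
              have h21 : (2:ℤ) * ((2:ℤ) ^ (k-2)) = (2:ℤ) ^ (k-1) := by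
                rw [← pow_succ']
                congr 1
                omega
              rw [h21] at this
              have h2v : 2 * v = (x.val : ℤ) + (x₀.val : ℤ) := by omega
              rwa [h2v] at this
            · left
              have hcop : IsCoprime ((2:ℤ) ^ (k-2)) v :=
                ((hp2'.coprime_iff_not_dvd).mpr hB).pow_left
              have : (2:ℤ) ^ (k-2) ∣ u := hcop.dvd_of_dvd_mul_right huv
              have : (2:ℤ) * ((2:ℤ) ^ (k-2)) ∣ 2 * u := mul_dvd_mul_left 2 this
              have h21 : (2:ℤ) * ((2:ℤ) ^ (k-2)) = (2:ℤ) ^ (k-1) := by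
                rw [← pow_succ']
                congr 1
                omega
              rw [h21] at this
              have h2u : 2 * u = (x.val : ℤ) - (x₀.val : ℤ) := by omega
              rwa [h2u] at this
          rcases hmain with hm | hm
          · rcases key2 _ hm with h0 | h0 <;> rw [cast_sub_eq] at h0
            · have : x = x₀ := by linear_combination h0
              simp [this]
            · have : x = x₀ + h2 := by linear_combination h0
              simp [this]
          · rcases key2 _ hm with h0 | h0 <;> rw [cast_add_eq] at h0
            · have : x = -x₀ := by linear_combination h0
              simp [this]
            · have : x = -x₀ + h2 := by linear_combination h0
              simp [this]
        have hfin : ({x₀, x₀ + h2, -x₀, -x₀ + h2} : Set (ZMod (2 ^ k))).Finite :=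
          (((Set.finite_singleton _).insert _).insert _).insert _
        have hle := Set.ncard_le_ncard hsub hfin
        have b1 := Set.ncard_insert_le x₀ ({x₀ + h2, -x₀, -x₀ + h2} : Set (ZMod (2 ^ k)))
        have b2 := Set.ncard_insert_le (x₀ + h2) ({-x₀, -x₀ + h2} : Set (ZMod (2 ^ k)))
        have b3 := Set.ncard_insert_le (-x₀) ({-x₀ + h2} : Set (ZMod (2 ^ k)))
        have b4 : ({-x₀ + h2} : Set (ZMod (2 ^ k))).ncard = 1 := Set.ncard_singleton _
        have : (2:ℕ) ^ 2 = 4 := by norm_num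
        omega
    · -- odd prime : at most 2 solutions
      rw [sqW, if_neg hpc, if_neg hp2]
      have hsub : S ⊆ {x₀, -x₀} := by
        intro x hx
        have hx' := hprod x hx
        have hnot : ¬ ((p : ℤ) ∣ ((x.val : ℤ) - (x₀.val : ℤ)) ∧
            (p : ℤ) ∣ ((x.val : ℤ) + (x₀.val : ℤ))) := by
          rintro ⟨hA, hB⟩
          have h2X : (p : ℤ) ∣ 2 * (x.val : ℤ) := by
            have := dvd_add hA hB
            rwa [show (x.val : ℤ) - (x₀.val : ℤ) + ((x.val : ℤ) + (x₀.val : ℤ)) = 2 * (x.val : ℤ) by ring] at this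
          rcases (Nat.prime_iff_prime_int.mp hp).dvd_mul.mp h2X with h | h
          · have : p ∣ 2 := by exact_mod_cast h
            exact hp2 ((Nat.prime_dvd_prime_iff_eq hp Nat.prime_two).mp this)
          · exact hnd x hx h
        rw [not_and_or] at hnot
        rcases hnot with hA | hB
        · -- coprime to X - Y, so p^k ∣ X + Y, x = -x₀
          have hcop : IsCoprime ((p : ℤ) ^ k) ((x.val : ℤ) - (x₀.val : ℤ)) :=
            (((Nat.prime_iff_prime_int.mp hp).coprime_iff_not_dvd).mpr hA).pow_left
          have hdv : (p : ℤ) ^ k ∣ ((x.val : ℤ) + (x₀.val : ℤ)) :=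
            hcop.dvd_of_dvd_mul_left hx'
          have : (((x.val : ℤ) + (x₀.val : ℤ) : ℤ) : ZMod (p ^ k)) = 0 := by
            rw [ZMod.intCast_zmod_eq_zero_iff_dvd]
            push_cast
            exact hdv
          rw [cast_add_eq] at this
          have : x = -x₀ := by linear_combination this
          simp [this]
        · have hcop : IsCoprime ((p : ℤ) ^ k) ((x.val : ℤ) + (x₀.val : ℤ)) :=
            (((Nat.prime_iff_prime_int.mp hp).coprime_iff_not_dvd).mpr hB).pow_left
          have hdv : (p : ℤ) ^ k ∣ ((x.val : ℤ) - (x₀.val : ℤ)) :=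
            hcop.dvd_of_dvd_mul_right hx'
          have : (((x.val : ℤ) - (x₀.val : ℤ) : ℤ) : ZMod (p ^ k)) = 0 := by
            rw [ZMod.intCast_zmod_eq_zero_iff_dvd]
            push_cast
            exact hdv
          rw [cast_sub_eq] at this
          have : x = x₀ := by linear_combination this
          simp [this]
      calc S.ncard ≤ ({x₀, -x₀} : Set (ZMod (p ^ k))).ncard :=
            Set.ncard_le_ncard hsub ((Set.finite_singleton _).insert _)
        _ ≤ 1 + 1 := le_trans (Set.ncard_insert_le _ _)
              (by simp [Set.ncard_singleton])
        _ ≤ 2 ^ 1 := by norm_num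

lemma sq_count_mul (a b : ℕ) (hab : Nat.Coprime a b) (c : ℤ) :
    Nat.card {x : ZMod (a * b) // x ^ 2 = (c : ZMod (a * b))}
      = Nat.card {x : ZMod a // x ^ 2 = (c : ZMod a)}
        * Nat.card {x : ZMod b // x ^ 2 = (c : ZMod b)} := by
  let e := ZMod.chineseRemainder hab
  have he : ∀ x : ZMod (a * b), (x ^ 2 = (c : ZMod (a * b))) ↔
      ((e x).1 ^ 2 = (c : ZMod a) ∧ (e x).2 ^ 2 = (c : ZMod b)) := by
    intro x
    constructor
    · intro h
      have h2 : e (x ^ 2) = e ((c : ZMod (a * b))) := by rw [h]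
      rw [map_pow, map_intCast] at h2
      constructor
      · have := congrArg Prod.fst h2; simpa using this
      · have := congrArg Prod.snd h2; simpa using this
    · rintro ⟨h1, h2⟩
      apply e.injective
      rw [map_pow, map_intCast]
      ext
      · simpa using h1
      · simpa using h2
  calc Nat.card {x : ZMod (a * b) // x ^ 2 = (c : ZMod (a * b))}
      = Nat.card {y : ZMod a × ZMod b // y.1 ^ 2 = (c : ZMod a) ∧ y.2 ^ 2 = (c : ZMod b)} :=
        Nat.card_congr (e.toEquiv.subtypeEquiv he)
    _ = Nat.card ({x : ZMod a // x ^ 2 = (c : ZMod a)} × {x : ZMod b // x ^ 2 = (c : ZMod b)}) :=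
        Nat.card_congr (Equiv.subtypeProdEquivProd (p := fun z : ZMod a => z ^ 2 = (c : ZMod a)) (q := fun z : ZMod b => z ^ 2 = (c : ZMod b)))
    _ = _ := Nat.card_prod _ _

lemma sq_count_le (c : ℤ) : ∀ n : ℕ, 0 < n →
    (∀ p : ℕ, p.Prime → ¬(p ^ 2 ∣ n ∧ (p : ℤ) ^ 2 ∣ c)) →
    Nat.card {x : ZMod n // x ^ 2 = (c : ZMod n)} ≤ 2 ^ (∑ p ∈ n.primeFactors, sqW c p) := by
  intro n
  induction n using Nat.recOnPosPrimePosCoprime with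
  | prime_pow p k hp hk =>
    intro _ H
    rw [Nat.primeFactors_prime_pow hk.ne' hp, Finset.sum_singleton]
    exact sq_count_pp p k hp hk c (H p hp)
  | zero => intro h; exact absurd h (lt_irrefl 0)
  | one =>
    intro _ _
    have : Nat.card {x : ZMod 1 // x ^ 2 = (c : ZMod 1)} ≤ Nat.card (ZMod 1) :=
      Finite.card_subtype_le _
    simpa using this
  | coprime a b ha hb hab iha ihb =>
    intro _ H
    rw [sq_count_mul a b hab c,
      Nat.primeFactors_mul (by omega : a ≠ 0) (by omega : b ≠ 0),
      Finset.sum_union hab.disjoint_primeFactors, pow_add]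
    exact Nat.mul_le_mul
      (iha (by omega) (fun p hp h2 => H p hp ⟨h2.1.mul_right b, h2.2⟩))
      (ihb (by omega) (fun p hp h2 => H p hp ⟨h2.1.mul_left a, h2.2⟩))

/-- The greatest common quadratic divisor of `m` and `n`:
the largest `d` with `d² ∣ m` and `d² ∣ n`. -/
noncomputable def gcd2 (m n : ℤ) : ℕ :=
  sSup {d : ℕ | (d : ℤ) ^ 2 ∣ m ∧ (d : ℤ) ^ 2 ∣ n}

/-- The set of `b` with `b² ≡ Δ (mod a)` consists of at most
`2^(ω(a/gcd(a,Δ))+1)` residue classes modulo `a / gcd₂(a,Δ)`. -/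
theorem stmt1 (a : ℕ) (ha : 0 < a) (Δ : ℤ) (hΔ : Δ ≠ 0) :
    ∃ S : Finset ℤ, S.card ≤ 2 ^ ((a / Int.gcd (a : ℤ) Δ).primeFactors.card + 1) ∧
      {b : ℤ | (a : ℤ) ∣ b ^ 2 - Δ} =
        {b : ℤ | ∃ r ∈ S, b % ((a / gcd2 (a : ℤ) Δ : ℕ) : ℤ) =
          r % ((a / gcd2 (a : ℤ) Δ : ℕ) : ℤ)} := by
  classical
  set g := gcd2 (a : ℤ) Δ with hg
  have hgdef : g = sSup {d : ℕ | (d : ℤ) ^ 2 ∣ (a : ℤ) ∧ (d : ℤ) ^ 2 ∣ Δ} := rfl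
  have hbdd : BddAbove {d : ℕ | (d : ℤ) ^ 2 ∣ (a : ℤ) ∧ (d : ℤ) ^ 2 ∣ Δ} := by
    refine ⟨Δ.natAbs, fun d hd => ?_⟩
    have hd2 : (d : ℤ) ^ 2 ∣ Δ := hd.2
    have hdne : d ≠ 0 := by
      rintro rfl
      exact hΔ (by simpa using hd2)
    have h2 : (d : ℤ) ^ 2 ≤ |Δ| := Int.le_of_dvd (abs_pos.mpr hΔ) ((dvd_abs _ Δ).mpr hd2)
    have h3 : (d : ℤ) ≤ (d : ℤ) ^ 2 := by
      nlinarith [(by exact_mod_cast Nat.one_le_iff_ne_zero.mpr hdne : (1:ℤ) ≤ (d:ℤ))]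
    have : (d : ℤ) ≤ (Δ.natAbs : ℤ) := by
      rw [Int.abs_eq_natAbs] at h2
      omega
    exact_mod_cast this
  have hmem : (g : ℤ) ^ 2 ∣ (a : ℤ) ∧ (g : ℤ) ^ 2 ∣ Δ := by
    rw [hgdef]
    exact Nat.sSup_mem ⟨1, by norm_num⟩ hbdd
  have hmax : ∀ d : ℕ, (d : ℤ) ^ 2 ∣ (a : ℤ) → (d : ℤ) ^ 2 ∣ Δ → d ≤ g := by
    intro d h1 h2
    rw [hgdef]
    exact le_csSup hbdd ⟨h1, h2⟩
  have hg1 : 1 ≤ g := hmax 1 (by norm_num) (by norm_num)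
  have hga : g ^ 2 ∣ a := by
    have := hmem.1
    rw [show ((g:ℤ))^2 = ((g^2 : ℕ) : ℤ) by push_cast; ring] at this
    exact_mod_cast this
  obtain ⟨a', ha'⟩ := hga
  obtain ⟨Δ', hΔ'⟩ := hmem.2
  have ha'pos : 0 < a' := by
    rcases Nat.eq_zero_or_pos a' with h | h
    · subst h; simp at ha'; omega
    · exact h
  have hΔ'ne : Δ' ≠ 0 := by
    rintro rfl
    simp at hΔ'
    exact hΔ hΔ'
  haveI : NeZero a' := ⟨ha'pos.ne'⟩
  have hA : (a : ℤ) = (g : ℤ) ^ 2 * (a' : ℤ) := by exact_mod_cast congrArg (Nat.cast : ℕ → ℤ) ha'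
  have H : ∀ p : ℕ, p.Prime → ¬(p ^ 2 ∣ a' ∧ (p : ℤ) ^ 2 ∣ Δ') := by
    rintro p hp ⟨h1, h2⟩
    have hle : g * p ≤ g := by
      apply hmax
      · rw [hA]
        have : ((g * p : ℕ) : ℤ) ^ 2 = (g : ℤ) ^ 2 * ((p ^ 2 : ℕ) : ℤ) := by push_cast; ring
        rw [this]
        exact mul_dvd_mul_left _ (Int.natCast_dvd_natCast.mpr h1)
      · rw [hΔ']
        have : ((g * p : ℕ) : ℤ) ^ 2 = (g : ℤ) ^ 2 * ((p : ℤ)) ^ 2 := by push_cast; ring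
        rw [this]
        exact mul_dvd_mul_left _ h2
    have : 2 ≤ p := hp.two_le
    nlinarith
  have hcount := sq_count_le Δ' a' ha'pos H
  -- the exponent bound
  set q := a / Int.gcd (a : ℤ) Δ with hq
  set F := a'.primeFactors.filter (fun p : ℕ => ¬ (p : ℤ) ∣ Δ') with hF
  have hgne : g ≠ 0 := by omega
  have hdA : Int.gcd (a : ℤ) Δ ∣ a := Int.natCast_dvd_natCast.mp (Int.gcd_dvd_left _ _)
  have hdpos : 0 < Int.gcd (a : ℤ) Δ := Int.gcd_pos_iff.mpr (Or.inr hΔ)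
  have hqpos : 0 < q := Nat.div_pos (Nat.le_of_dvd ha hdA) hdpos
  have hFq : F ⊆ q.primeFactors := by
    intro p hpF
    rw [hF, Finset.mem_filter] at hpF
    obtain ⟨hpa, hpd⟩ := hpF
    rw [Nat.mem_primeFactors] at hpa
    obtain ⟨hp, hpa', _⟩ := hpa
    rw [Nat.mem_primeFactors]
    refine ⟨hp, ?_, hqpos.ne'⟩
    -- p divides q = a / gcd
    have hΔabs : Δ.natAbs = g ^ 2 * Δ'.natAbs := by
      rw [hΔ', Int.natAbs_mul, Int.natAbs_pow]
      simp
    have hΔAne : Δ.natAbs ≠ 0 := Int.natAbs_ne_zero.mpr hΔ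
    have hfa : a.factorization p = 2 * g.factorization p + a'.factorization p := by
      rw [ha', Nat.factorization_mul (pow_ne_zero 2 hgne) ha'pos.ne', Nat.factorization_pow]
      simp [mul_comm]
    have hpdn : ¬ p ∣ Δ'.natAbs := by
      intro hdd
      apply hpd
      have : (p : ℤ) ∣ (Δ'.natAbs : ℤ) := Int.natCast_dvd_natCast.mpr hdd
      rwa [Int.natCast_natAbs, dvd_abs] at this
    have hfΔ : Δ.natAbs.factorization p = 2 * g.factorization p := by
      rw [hΔabs, Nat.factorization_mul (pow_ne_zero 2 hgne) (Int.natAbs_ne_zero.mpr hΔ'ne),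
        Nat.factorization_pow]
      simp [Nat.factorization_eq_zero_of_not_dvd hpdn, mul_comm]
    have hdΔ : Int.gcd (a : ℤ) Δ ∣ Δ.natAbs := by
      have h0 : ((Int.gcd (a : ℤ) Δ : ℕ) : ℤ) ∣ Δ := Int.gcd_dvd_right _ _
      have : ((Int.gcd (a : ℤ) Δ : ℕ) : ℤ) ∣ (Δ.natAbs : ℤ) := by
        rwa [Int.natCast_natAbs, dvd_abs]
      exact_mod_cast this
    have hdf : (Int.gcd (a : ℤ) Δ).factorization p ≤ 2 * g.factorization p := by
      have hle := (Nat.factorization_le_iff_dvd hdpos.ne' hΔAne).mpr hdΔ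
      have := hle p
      rwa [hfΔ] at this
    have hA1 : 1 ≤ a'.factorization p :=
      (hp.dvd_iff_one_le_factorization ha'pos.ne').mp hpa'
    have hfq : 1 ≤ q.factorization p := by
      rw [hq, Nat.factorization_div hdA]
      have : (a.factorization - (Int.gcd (a : ℤ) Δ).factorization) p
          = a.factorization p - (Int.gcd (a : ℤ) Δ).factorization p := rfl
      rw [this, hfa]
      omega
    exact (hp.dvd_iff_one_le_factorization hqpos.ne').mpr hfq
  have hexp : (∑ p ∈ a'.primeFactors, sqW Δ' p) ≤ q.primeFactors.card + 1 := by
    have step1 : ∀ p ∈ a'.primeFactors,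
        sqW Δ' p ≤ (if (p : ℤ) ∣ Δ' then 0 else 1) + (if p = 2 then 1 else 0) := by
      intro p _
      unfold sqW
      split_ifs <;> omega
    have e1 : ∑ p ∈ a'.primeFactors, (if (p : ℤ) ∣ Δ' then 0 else 1) = F.card := by
      rw [Finset.sum_ite, Finset.sum_const, Finset.sum_const]
      simp [hF]
    have e2 : (∑ p ∈ a'.primeFactors, (if p = 2 then 1 else 0)) ≤ 1 := by
      rw [Finset.sum_ite, Finset.sum_const, Finset.sum_const]
      simp only [smul_eq_mul, mul_one, mul_zero, add_zero]
      have hsub : a'.primeFactors.filter (fun p => p = 2) ⊆ {2} := by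
        intro x hx
        rw [Finset.mem_filter] at hx
        simp [hx.2]
      calc (a'.primeFactors.filter (fun p => p = 2)).card ≤ ({2} : Finset ℕ).card :=
            Finset.card_le_card hsub
        _ = 1 := Finset.card_singleton _
    calc (∑ p ∈ a'.primeFactors, sqW Δ' p)
        ≤ ∑ p ∈ a'.primeFactors, ((if (p : ℤ) ∣ Δ' then 0 else 1) + (if p = 2 then 1 else 0)) :=
          Finset.sum_le_sum step1
      _ = (∑ p ∈ a'.primeFactors, (if (p : ℤ) ∣ Δ' then 0 else 1))
          + (∑ p ∈ a'.primeFactors, (if p = 2 then 1 else 0)) := Finset.sum_add_distrib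
      _ ≤ F.card + 1 := by rw [e1]; omega
      _ ≤ q.primeFactors.card + 1 := by
          have := Finset.card_le_card hFq
          omega
  -- the finset of residues
  set T : Finset (ZMod a') := Finset.univ.filter (fun x => x ^ 2 = (Δ' : ZMod a')) with hT
  have hTcard : T.card = Nat.card {x : ZMod a' // x ^ 2 = (Δ' : ZMod a')} := by
    rw [Nat.card_eq_fintype_card, Fintype.card_subtype]
  set S := T.image (fun x : ZMod a' => (g : ℤ) * (x.val : ℤ)) with hS
  have hM : a / g = g * a' := by
    rw [ha', pow_two, mul_assoc]
    exact Nat.mul_div_cancel_left _ (by omega)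
  have hMZ : ((a / g : ℕ) : ℤ) = (g : ℤ) * (a' : ℤ) := by
    rw [hM]; push_cast; ring
  refine ⟨S, ?_, ?_⟩
  · calc S.card ≤ T.card := Finset.card_image_le
      _ ≤ 2 ^ (∑ p ∈ a'.primeFactors, sqW Δ' p) := hTcard ▸ hcount
      _ ≤ 2 ^ (q.primeFactors.card + 1) := Nat.pow_le_pow_right (by norm_num) hexp
  · ext b
    simp only [Set.mem_setOf_eq]
    constructor
    · intro hb
      have hg2b : (g : ℤ) ^ 2 ∣ b ^ 2 := by
        have h1 : (g : ℤ) ^ 2 ∣ b ^ 2 - Δ := dvd_trans ⟨(a' : ℤ), hA⟩ hb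
        have h2 : (g : ℤ) ^ 2 ∣ Δ := ⟨Δ', hΔ'⟩
        have := dvd_add h1 h2
        simpa using this
      have hgb : (g : ℤ) ∣ b := (Int.pow_dvd_pow_iff two_ne_zero).mp hg2b
      obtain ⟨t, rfl⟩ := hgb
      have hta : (a' : ℤ) ∣ t ^ 2 - Δ' := by
        have h1 : (g : ℤ) ^ 2 * (a' : ℤ) ∣ (g : ℤ) ^ 2 * (t ^ 2 - Δ') := by
          rw [← hA]
          have : ((g : ℤ) * t) ^ 2 - Δ = (g : ℤ) ^ 2 * (t ^ 2 - Δ') := by rw [hΔ']; ring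
          rw [← this]
          exact hb
        exact (mul_dvd_mul_iff_left (pow_ne_zero 2 (by exact_mod_cast hgne : (g:ℤ) ≠ 0))).mp h1
      set x : ZMod a' := ((t : ℤ) : ZMod a') with hx
      have hxT : x ∈ T := by
        rw [hT, Finset.mem_filter]
        refine ⟨Finset.mem_univ _, ?_⟩
        have h0 : ((t ^ 2 - Δ' : ℤ) : ZMod a') = 0 := (ZMod.intCast_zmod_eq_zero_iff_dvd _ _).mpr hta
        push_cast at h0
        rw [hx]
        linear_combination h0
      refine ⟨(g : ℤ) * (x.val : ℤ), Finset.mem_image_of_mem _ hxT, ?_⟩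
      have h1 : (a' : ℤ) ∣ t - (x.val : ℤ) := by
        have h0 : ((t - (x.val : ℤ) : ℤ) : ZMod a') = 0 := by
          push_cast
          rw [ZMod.natCast_val, ZMod.cast_id, ← hx, sub_self]
        exact (ZMod.intCast_zmod_eq_zero_iff_dvd _ _).mp h0
      have hdvd2 : ((a / g : ℕ) : ℤ) ∣ ((g : ℤ) * (x.val : ℤ) - (g : ℤ) * t) := by
        rw [hMZ]
        have h2 := mul_dvd_mul_left (g : ℤ) h1
        have h3 : (g : ℤ) * (t - (x.val : ℤ)) = -((g : ℤ) * (x.val : ℤ) - (g : ℤ) * t) := by ring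
        rw [h3] at h2
        exact (dvd_neg).mp h2
      exact Int.modEq_iff_dvd.mpr hdvd2
    · rintro ⟨r, hr, hbr⟩
      obtain ⟨x, hxT, rfl⟩ := Finset.mem_image.mp hr
      have hxsq : x ^ 2 = (Δ' : ZMod a') := (Finset.mem_filter.mp hxT).2
      have hdv : ((a / g : ℕ) : ℤ) ∣ (g : ℤ) * (x.val : ℤ) - b :=
        Int.ModEq.dvd (hbr : Int.ModEq _ b _)
      rw [hMZ] at hdv
      obtain ⟨s, hs⟩ := hdv
      have hb : b = (g : ℤ) * ((x.val : ℤ) + (a' : ℤ) * (-s)) := by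
        linear_combination -hs
      have hx2 : (a' : ℤ) ∣ (x.val : ℤ) ^ 2 - Δ' := zmod_sq_dvd a' Δ' x hxsq
      rw [hb, hΔ', hA]
      have hid : ((g : ℤ) * ((x.val : ℤ) + (a' : ℤ) * (-s))) ^ 2 - (g : ℤ) ^ 2 * Δ'
          = (g : ℤ) ^ 2 * (((x.val : ℤ) ^ 2 - Δ')
            + (a' : ℤ) * (2 * (x.val : ℤ) * (-s) + (a' : ℤ) * (-s) ^ 2)) := by ring
      rw [hid]
      exact mul_dvd_mul_left _ (dvd_add hx2 (Dvd.intro _ rfl))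
end

section
/- For any negative discriminant Δ with |Δ| ≥ 10^14, the number of divisors of the modified conductor satisfies σ₀(f̃) ≤ |Δ|^{0.192}. -/
/-- `D` is a fundamental discriminant. -/
def IsFundDisc (D : ℤ) : Prop :=
  (D % 4 = 1 ∧ Squarefree D) ∨
    (∃ m : ℤ, D = 4 * m ∧ (m % 4 = 2 ∨ m % 4 = 3) ∧ Squarefree m)

/-! By multiplicativity of the divisor function, `d(n)^4 ≤ (∏_{p ∣ n} w_p) n` as soon as
`(k + 1)^4 ≤ w_p p^k` for every prime power `p^k ∥ n`. The optimal weight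
`w_p = max_{k ≥ 1} (k + 1)^4 / p^k` is below `1` for `p ≥ 17`, where we take `w_p = 1`;
the product of the remaining six weights is
`81/2 · 256/27 · 81/25 · 16/7 · 16/11 · 16/13 < 5091`, so `d(n)^4 ≤ 5091 n`.
Since `f̃² ≤ |Δ|`, this gives `σ₀(f̃)^4 ≤ 5091 |Δ|^{1/2}`, and `5091 ≤ 10^{14 · 0.268}`
absorbs the constant into `|Δ|^{0.268}`. -/

open Finset

theorem Nat.card_divisors_pow_le_prod_mul {w : ℕ → ℝ} {m : ℕ}
    (hw : ∀ p k : ℕ, p.Prime → 1 ≤ k → ((k : ℝ) + 1) ^ m ≤ w p * (p : ℝ) ^ k)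
    {n : ℕ} (hn : n ≠ 0) :
    (#n.divisors : ℝ) ^ m ≤ (∏ p ∈ n.primeFactors, w p) * n := by
  have hn_prod : (n : ℝ) = ∏ p ∈ n.primeFactors, (p : ℝ) ^ n.factorization p := by
    exact_mod_cast Nat.prod_primeFactors_pow_factorization hn
  rw [Nat.card_divisors hn, hn_prod, ← prod_mul_distrib]
  push_cast
  rw [← prod_pow]
  refine prod_le_prod (fun _ _ => by positivity) fun p hp => ?_
  have hp' := Nat.prime_of_mem_primeFactors hp
  exact hw p _ hp' (hp'.factorization_pos_of_dvd hn (Nat.dvd_of_mem_primeFactors hp))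

/-- Beyond `k₀` the left side grows by a factor `((k + 2) / (k + 1))^m ≤ (b / a)^m ≤ p`,
at most as fast as the right side. -/
theorem Nat.succ_pow_le_mul_pow_of_step {p c d m a b k₀ : ℕ} (ha : 0 < a)
    (hk₀ : 1 ≤ k₀) (hab : ∀ k ≥ k₀, a * (k + 2) ≤ b * (k + 1)) (hba : b ^ m ≤ p * a ^ m)
    (hsmall : ∀ k ≤ k₀, 1 ≤ k → d * (k + 1) ^ m ≤ c * p ^ k) :
    ∀ k, 1 ≤ k → d * (k + 1) ^ m ≤ c * p ^ k := by
  have hstep : ∀ k ≥ k₀, (k + 2) ^ m ≤ p * (k + 1) ^ m := fun k hk => by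
    refine Nat.le_of_mul_le_mul_left ?_ (pow_pos ha m)
    calc a ^ m * (k + 2) ^ m = (a * (k + 2)) ^ m := (mul_pow ..).symm
      _ ≤ (b * (k + 1)) ^ m := Nat.pow_le_pow_left (hab k hk) m
      _ = b ^ m * (k + 1) ^ m := mul_pow ..
      _ ≤ p * a ^ m * (k + 1) ^ m := Nat.mul_le_mul_right _ hba
      _ = a ^ m * (p * (k + 1) ^ m) := by ring
  intro k hk
  rcases le_total k k₀ with hle | hge
  · exact hsmall k hle hk
  induction k, hge using Nat.le_induction with
  | base => exact hsmall k₀ le_rfl hk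
  | succ k hkk₀ ih =>
    calc d * (k + 1 + 1) ^ m ≤ d * (p * (k + 1) ^ m) := Nat.mul_le_mul_left d (hstep k hkk₀)
      _ = p * (d * (k + 1) ^ m) := by ring
      _ ≤ p * (c * p ^ k) := Nat.mul_le_mul_left p (ih (by omega))
      _ = c * p ^ (k + 1) := by ring

theorem Nat.two_mul_succ_pow_four_le (k : ℕ) (hk : 1 ≤ k) : 2 * (k + 1) ^ 4 ≤ 81 * 2 ^ k :=
  Nat.succ_pow_le_mul_pow_of_step (a := 6) (b := 7) (k₀ := 5) (by norm_num) (by norm_num)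
    (by omega) (by norm_num) (by decide) k hk

theorem Nat.twentyseven_mul_succ_pow_four_le (k : ℕ) (hk : 1 ≤ k) :
    27 * (k + 1) ^ 4 ≤ 256 * 3 ^ k :=
  Nat.succ_pow_le_mul_pow_of_step (a := 4) (b := 5) (k₀ := 3) (by norm_num) (by norm_num)
    (by omega) (by norm_num) (by decide) k hk

theorem Nat.twentyfive_mul_succ_pow_four_le (k : ℕ) (hk : 1 ≤ k) :
    25 * (k + 1) ^ 4 ≤ 81 * 5 ^ k :=
  Nat.succ_pow_le_mul_pow_of_step (a := 3) (b := 4) (k₀ := 2) (by norm_num) (by norm_num)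
    (by omega) (by norm_num) (by decide) k hk

theorem Nat.mul_succ_pow_four_le_of_seven_le {p : ℕ} (hp : 7 ≤ p) (k : ℕ) (hk : 1 ≤ k) :
    p * (k + 1) ^ 4 ≤ 16 * p ^ k :=
  Nat.succ_pow_le_mul_pow_of_step (a := 2) (b := 3) (k₀ := 1) (by norm_num) (by norm_num)
    (by omega) (by omega) (fun k hle hge => by rw [show k = 1 by omega, pow_one]; omega) k hk

theorem Nat.succ_pow_four_le_of_sixteen_le {p : ℕ} (hp : 16 ≤ p) (k : ℕ) :
    (k + 1) ^ 4 ≤ p ^ k :=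
  calc (k + 1) ^ 4 ≤ (2 ^ k) ^ 4 := Nat.pow_le_pow_left Nat.lt_two_pow_self 4
    _ = 16 ^ k := by rw [← pow_mul, mul_comm, pow_mul]; norm_num
    _ ≤ p ^ k := Nat.pow_le_pow_left hp k

/-- `max (1, max_{k ≥ 1} (k + 1)^4 / p^k)` for a prime `p`. -/
noncomputable def divisorWeight (p : ℕ) : ℝ :=
  if p = 2 then 81 / 2 else if p = 3 then 256 / 27 else if p = 5 then 81 / 25
  else if p = 7 ∨ p = 11 ∨ p = 13 then 16 / p else 1

theorem one_le_divisorWeight (p : ℕ) : 1 ≤ divisorWeight p := by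
  unfold divisorWeight
  split_ifs with _ _ _ h
  any_goals norm_num
  rcases h with rfl | rfl | rfl <;> norm_num

theorem divisorWeight_eq_one {p : ℕ} (hp : p ∉ ({2, 3, 5, 7, 11, 13} : Finset ℕ)) :
    divisorWeight p = 1 := by
  simp only [mem_insert, mem_singleton, not_or] at hp
  simp [divisorWeight, hp]

theorem prod_divisorWeight_le (S : Finset ℕ) : ∏ p ∈ S, divisorWeight p ≤ 5091 := by
  set T : Finset ℕ := {2, 3, 5, 7, 11, 13}
  calc ∏ p ∈ S, divisorWeight p = ∏ p ∈ S ∩ T, divisorWeight p :=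
        (prod_subset inter_subset_left fun p hpS hpST =>
          divisorWeight_eq_one fun hpT => hpST (mem_inter.2 ⟨hpS, hpT⟩)).symm
    _ ≤ ∏ p ∈ T, divisorWeight p :=
        prod_le_prod_of_subset_of_one_le inter_subset_right
          (fun p _ => zero_le_one.trans (one_le_divisorWeight p))
          fun p _ _ => one_le_divisorWeight p
    _ ≤ 5091 := by norm_num [T, divisorWeight]

theorem succ_cast_pow_le_div_mul_pow {c d p k m : ℕ} (hd : 0 < d)
    (h : d * (k + 1) ^ m ≤ c * p ^ k) : ((k : ℝ) + 1) ^ m ≤ (c / d : ℝ) * (p : ℝ) ^ k := by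
  rw [div_mul_eq_mul_div, le_div_iff₀ (by exact_mod_cast hd)]
  exact_mod_cast (mul_comm _ _).trans_le h

theorem succ_pow_four_le_divisorWeight_mul_pow {p k : ℕ} (hp : p.Prime) (hk : 1 ≤ k) :
    ((k : ℝ) + 1) ^ 4 ≤ divisorWeight p * (p : ℝ) ^ k := by
  unfold divisorWeight
  split_ifs with h2 h3 h5 h7
  · subst h2
    exact_mod_cast succ_cast_pow_le_div_mul_pow (by norm_num) (Nat.two_mul_succ_pow_four_le k hk)
  · subst h3
    exact_mod_cast succ_cast_pow_le_div_mul_pow (by norm_num)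
      (Nat.twentyseven_mul_succ_pow_four_le k hk)
  · subst h5
    exact_mod_cast succ_cast_pow_le_div_mul_pow (by norm_num)
      (Nat.twentyfive_mul_succ_pow_four_le k hk)
  · exact_mod_cast succ_cast_pow_le_div_mul_pow hp.pos
      (Nat.mul_succ_pow_four_le_of_seven_le (by omega) k hk)
  · have h16 : 16 ≤ p := by
      by_contra! hlt
      interval_cases p <;> first | omega | norm_num at hp
    rw [one_mul]
    exact_mod_cast Nat.succ_pow_four_le_of_sixteen_le h16 k

theorem Nat.card_divisors_pow_four_le (n : ℕ) : (#n.divisors : ℝ) ^ 4 ≤ 5091 * n := by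
  rcases eq_or_ne n 0 with rfl | hn
  · simp
  calc (#n.divisors : ℝ) ^ 4 ≤ (∏ p ∈ n.primeFactors, divisorWeight p) * n :=
        Nat.card_divisors_pow_le_prod_mul
          (fun _ _ hp hk => succ_pow_four_le_divisorWeight_mul_pow hp hk) hn
    _ ≤ 5091 * n := by gcongr; exact prod_divisorWeight_le _

theorem five_thousand_ninety_one_le_rpow {x : ℝ} (hx : 10 ^ 14 ≤ x) :
    (5091 : ℝ) ≤ x ^ (0.268 : ℝ) := by
  have h10 : (5091 : ℝ) ≤ ((10 : ℝ) ^ 14) ^ (0.268 : ℝ) := by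
    refine le_of_pow_le_pow_left₀ (n := 250) (by norm_num) (by positivity) ?_
    rw [← Real.rpow_natCast (((10 : ℝ) ^ 14) ^ (0.268 : ℝ)), ← Real.rpow_mul (by positivity)]
    norm_num
  exact h10.trans (Real.rpow_le_rpow (by positivity) hx (by norm_num))

theorem Nat.card_divisors_le_rpow {n : ℕ} {x : ℝ} (hnx : (n : ℝ) ^ 2 ≤ x) (hx : 10 ^ 14 ≤ x) :
    (#n.divisors : ℝ) ≤ x ^ (0.192 : ℝ) := by
  have hx₀ : 0 ≤ x := le_trans (by norm_num) hx
  have hn : (n : ℝ) ≤ x ^ (1 / 2 : ℝ) := by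
    rw [← Real.sqrt_eq_rpow]
    exact (Real.le_sqrt n.cast_nonneg hx₀).2 hnx
  refine le_of_pow_le_pow_left₀ four_ne_zero (by positivity) ?_
  calc (#n.divisors : ℝ) ^ 4 ≤ 5091 * n := n.card_divisors_pow_four_le
    _ ≤ x ^ (0.268 : ℝ) * x ^ (1 / 2 : ℝ) := by
        gcongr
        exact five_thousand_ninety_one_le_rpow hx
    _ = (x ^ (0.192 : ℝ)) ^ 4 := by
        rw [← Real.rpow_add' hx₀ (by norm_num), ← Real.rpow_natCast, ← Real.rpow_mul hx₀]
        norm_num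

theorem IsFundDisc.emod_four {D : ℤ} (hD : IsFundDisc D) : D % 4 = 0 ∨ D % 4 = 1 := by
  rcases hD with ⟨h, -⟩ | ⟨m, rfl, -, -⟩ <;> omega

theorem sq_le_abs_of_eq_sq_mul {Δ D : ℤ} {f ftilde : ℕ} (hfact : Δ = (f : ℤ) ^ 2 * D)
    (hD0 : D ≠ 0) (hD : D % 4 = 0 ∨ D % 4 = 1)
    (hft1 : D % 4 = 1 → ftilde = f) (hft0 : D % 4 = 0 → ftilde = 2 * f) :
    (ftilde : ℤ) ^ 2 ≤ |Δ| := by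
  rw [hfact, abs_mul, abs_of_nonneg (sq_nonneg _)]
  rcases hD with hD | hD
  · have hD4 : 4 ≤ |D| :=
      Int.le_of_dvd (abs_pos.2 hD0) ((dvd_abs _ _).2 (Int.dvd_of_emod_eq_zero hD))
    calc ((ftilde : ℕ) : ℤ) ^ 2 = (f : ℤ) ^ 2 * 4 := by rw [hft0 hD]; push_cast; ring
      _ ≤ (f : ℤ) ^ 2 * |D| := mul_le_mul_of_nonneg_left hD4 (sq_nonneg _)
  · rw [hft1 hD]
    exact le_mul_of_one_le_right (sq_nonneg _) (Int.one_le_abs hD0)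

theorem stmt5_general (Δ D : ℤ) (f : ℕ)
    (hfact : Δ = (f : ℤ) ^ 2 * D) (hD : IsFundDisc D)
    (ftilde : ℕ) (hft1 : D % 4 = 1 → ftilde = f) (hft0 : D % 4 = 0 → ftilde = 2 * f)
    (hbig : (10 : ℝ) ^ 14 ≤ |(Δ : ℝ)|) :
    ((ArithmeticFunction.sigma 0) ftilde : ℝ) ≤ |(Δ : ℝ)| ^ (0.192 : ℝ) := by
  have hΔ0 : Δ ≠ 0 := by rintro rfl; norm_num at hbig
  have hD0 : D ≠ 0 := by rintro rfl; simp [hfact] at hΔ0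
  have hsq : (ftilde : ℝ) ^ 2 ≤ |(Δ : ℝ)| := by
    exact_mod_cast sq_le_abs_of_eq_sq_mul hfact hD0 hD.emod_four hft1 hft0
  rw [ArithmeticFunction.sigma_zero_apply]
  exact Nat.card_divisors_le_rpow hsq hbig

/-- For `|Δ| ≥ 10^14`, `σ₀(f̃) ≤ |Δ|^{0.192}`. -/
theorem stmt5 (Δ D : ℤ) (f : ℕ) (hf : 0 < f) (hΔneg : Δ < 0)
    (hfact : Δ = (f : ℤ) ^ 2 * D) (hD : IsFundDisc D)
    (ftilde : ℕ) (hft1 : D % 4 = 1 → ftilde = f) (hft0 : D % 4 = 0 → ftilde = 2 * f)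
    (hbig : (10 : ℝ) ^ 14 ≤ |(Δ : ℝ)|) :
    ((ArithmeticFunction.sigma 0) ftilde : ℝ) ≤ |(Δ : ℝ)| ^ (0.192 : ℝ) :=
  stmt5_general Δ D f hfact hD ftilde hft1 hft0 hbig
end

section
/- For |Δ| ≥ 10^14, F := max{2^{ω(a)} : 1 ≤ a ≤ |Δ|^{1/2}} satisfies F ≥ 18.54·log log(|Δ|^{1/2}). -/
/-- `F(Δ) = max {2^{ω(a)} : 1 ≤ a ≤ |Δ|^{1/2}}`. -/
def Fmax (Δ : ℤ) : ℕ :=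
  Finset.sup (Finset.Icc 1 (Int.natAbs Δ).sqrt) fun a => 2 ^ a.primeFactors.card


private lemma nth_prime_le_two_pow (i : ℕ) : Nat.nth Nat.Prime i ≤ 2 ^ (i + 1) := by
  induction i with
  | zero => simp [Nat.nth_prime_zero_eq_two]
  | succ i ih =>
    obtain ⟨p, hp, h1, h2⟩ := Nat.exists_prime_lt_and_le_two_mul (Nat.nth Nat.Prime i)
      (Nat.prime_nth_prime i).pos.ne'
    have h3 : Nat.nth Nat.Prime (i + 1) ≤ p := by
      by_contra h
      push_neg at h
      exact absurd (Nat.le_nth_of_lt_nth_succ h hp) (by omega)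
    calc Nat.nth Nat.Prime (i + 1) ≤ 2 * Nat.nth Nat.Prime i := le_trans h3 h2
      _ ≤ 2 * 2 ^ (i + 1) := Nat.mul_le_mul_left 2 ih
      _ = 2 ^ (i + 2) := by ring

private lemma omega_prod (k : ℕ) :
    (∏ i ∈ Finset.range k, Nat.nth Nat.Prime i).primeFactors.card = k := by
  have hinj := Nat.nth_injective Nat.infinite_setOf_prime
  have h1 : ∏ p ∈ (Finset.range k).image (Nat.nth Nat.Prime), p
      = ∏ i ∈ Finset.range k, Nat.nth Nat.Prime i :=
    Finset.prod_image (fun x _ y _ h => hinj h)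
  rw [← h1, Nat.primeFactors_prod (fun p hp => ?_),
    Finset.card_image_of_injective _ hinj, Finset.card_range]
  obtain ⟨i, _, rfl⟩ := Finset.mem_image.mp hp
  exact Nat.prime_nth_prime i

private lemma prod_nth_le (k : ℕ) :
    ∏ i ∈ Finset.range k, Nat.nth Nat.Prime i ≤ 2 ^ (∑ i ∈ Finset.range k, (i + 1)) := by
  rw [← Finset.prod_pow_eq_pow_sum]
  exact Finset.prod_le_prod' fun i _ => nth_prime_le_two_pow i

private lemma sum_succ_eq (k : ℕ) : 2 * (∑ i ∈ Finset.range k, (i + 1)) = k * (k + 1) := by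
  induction k with
  | zero => simp
  | succ k ih => rw [Finset.sum_range_succ, Nat.mul_add, ih]; ring

private lemma le_Fmax (Δ : ℤ) {a : ℕ} (h1 : 1 ≤ a) (h2 : a * a ≤ Δ.natAbs) :
    2 ^ a.primeFactors.card ≤ Fmax Δ := by
  unfold Fmax
  exact Finset.le_sup (f := fun a : ℕ => 2 ^ a.primeFactors.card)
    (Finset.mem_Icc.mpr ⟨h1, Nat.le_sqrt.mpr h2⟩)

private lemma pow_big : ∀ k : ℕ, (37.08 : ℝ) * (k + 10) ≤ 2 ^ (k + 10)
  | 0 => by norm_num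
  | (k + 1) => by
    have ih := pow_big k
    have hk : (0 : ℝ) ≤ (k : ℝ) := Nat.cast_nonneg k
    have h : k + 1 + 10 = (k + 10) + 1 := by omega
    rw [h, pow_succ]
    push_cast
    nlinarith [ih]

private lemma pow_big' {k : ℕ} (hk : 10 ≤ k) : (37.08 : ℝ) * k ≤ 2 ^ k := by
  obtain ⟨m, rfl⟩ := Nat.exists_eq_add_of_le hk
  have := pow_big m
  have h : 10 + m = m + 10 := by omega
  rw [h]
  push_cast at this ⊢
  linarith

private lemma omega_9699690 : (9699690 : ℕ).primeFactors.card = 8 := by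
  have hT : ∀ p ∈ ({2, 3, 5, 7, 11, 13, 17, 19} : Finset ℕ), p.Prime := by decide
  have hprod : (∏ p ∈ ({2, 3, 5, 7, 11, 13, 17, 19} : Finset ℕ), p) = 9699690 := by decide
  have := Nat.primeFactors_prod hT
  rw [hprod] at this
  rw [this]
  decide


set_option maxHeartbeats 2000000 in
/-- For `|Δ| ≥ 10^14`, `F ≥ 18.54 log log |Δ|^{1/2}`. -/
theorem stmt7 (Δ : ℤ) (hΔneg : Δ < 0) (hΔmod : Δ % 4 = 0 ∨ Δ % 4 = 1)
    (hbig : (10 : ℝ) ^ 14 ≤ |(Δ : ℝ)|) :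
    18.54 * Real.log (Real.log (Real.sqrt |(Δ : ℝ)|)) ≤ (Fmax Δ : ℝ) := by
  set s := Real.sqrt |(Δ : ℝ)| with hs
  have habs : |(Δ : ℝ)| = (Δ.natAbs : ℝ) := by
    rw [Nat.cast_natAbs]
    push_cast
    rfl
  have hN : (10 : ℕ) ^ 14 ≤ Δ.natAbs := by
    rw [habs] at hbig
    exact_mod_cast hbig
  have hs7 : (10 : ℝ) ^ 7 ≤ s := by
    calc (10 : ℝ) ^ 7 = Real.sqrt (((10 : ℝ) ^ 7) ^ 2) := (Real.sqrt_sq (by positivity)).symm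
      _ ≤ s := Real.sqrt_le_sqrt (by nlinarith)
  have hspos : (0 : ℝ) < s := by linarith
  have hlogs : (1 : ℝ) ≤ Real.log s := by
    rw [Real.le_log_iff_exp_le hspos]
    have := Real.exp_one_lt_d9
    linarith
  have hs2 : s * s = (Δ.natAbs : ℝ) := by rw [← habs]; exact Real.mul_self_sqrt (abs_nonneg _)
  clear_value s
  rcases le_or_gt (Real.log s) 100 with hA | hB
  · -- small case: use a = 9699690
    have hL : Real.log (Real.log s) ≤ Real.log 100 := Real.log_le_log (by linarith) hA
    have h100 : Real.log 100 ≤ 8.8 := by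
      have h1 : Real.log 100 ≤ Real.log ((3.2 : ℝ) ^ (4 : ℕ)) :=
        Real.log_le_log (by norm_num) (by norm_num)
      rw [Real.log_pow] at h1
      have h2 : Real.log 3.2 ≤ 2.2 := by
        have := Real.log_le_sub_one_of_pos (show (0:ℝ) < 3.2 by norm_num)
        linarith
      push_cast at h1
      linarith
    have hFm : 2 ^ 8 ≤ Fmax Δ := by
      have := le_Fmax Δ (a := 9699690) (by norm_num)
        (le_trans (by norm_num) hN)
      rwa [omega_9699690] at this
    have hFr : (256 : ℝ) ≤ (Fmax Δ : ℝ) := by exact_mod_cast hFm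
    linarith
  · -- large case
    have hlog2pos : (0 : ℝ) < Real.log 2 := Real.log_pos (by norm_num)
    set t : ℝ := Real.log s / Real.log 2 with ht
    have hlst : Real.log s ≤ t := by
      rw [ht, le_div_iff₀ hlog2pos]
      nlinarith [Real.log_two_lt_d9, hB]
    have ht100 : (100 : ℝ) ≤ t := by linarith
    have htpos : (0 : ℝ) ≤ t := by linarith
    set k := Nat.sqrt ⌊t⌋₊ with hk
    have hk10 : 10 ≤ k := by
      have h1 : 100 ≤ ⌊t⌋₊ := Nat.le_floor (by exact_mod_cast ht100)
      exact Nat.le_sqrt.mpr (by omega)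
    have hk2t : (k : ℝ) * k ≤ t := by
      have h1 : k * k ≤ ⌊t⌋₊ := Nat.sqrt_le ⌊t⌋₊
      calc ((k : ℝ) * k) ≤ (⌊t⌋₊ : ℝ) := by exact_mod_cast h1
        _ ≤ t := Nat.floor_le htpos
    have hkt : (k : ℝ) ≤ Real.sqrt t := by
      rw [Real.le_sqrt (Nat.cast_nonneg k) htpos]
      nlinarith
    have htk1 : t < ((k : ℝ) + 1) ^ 2 := by
      have h1 : ⌊t⌋₊ < (k + 1) * (k + 1) := Nat.lt_succ_sqrt ⌊t⌋₊
      have h2 : t < (⌊t⌋₊ : ℝ) + 1 := Nat.lt_floor_add_one t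
      have h3 : ((⌊t⌋₊ : ℝ) + 1) ≤ ((k : ℝ) + 1) * ((k : ℝ) + 1) := by exact_mod_cast h1
      nlinarith
    have hst : Real.sqrt t ≤ t := by
      nlinarith [Real.sq_sqrt htpos, Real.sqrt_nonneg t, sq_nonneg (Real.sqrt t - 10)]
    clear_value t k
    set E := ∑ i ∈ Finset.range k, (i + 1) with hE
    have hEt : (E : ℝ) ≤ t := by
      have h1 : 2 * (E : ℝ) = (k : ℝ) * (k + 1) := by exact_mod_cast sum_succ_eq k
      nlinarith [hk2t, hkt, hst]
    set a := ∏ i ∈ Finset.range k, Nat.nth Nat.Prime i with ha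
    have ha1 : 1 ≤ a :=
      Finset.one_le_prod' fun i _ => (Nat.prime_nth_prime i).one_lt.le
    have h2t : (2 : ℝ) ^ (t : ℝ) = s := by
      rw [Real.rpow_def_of_pos (by norm_num : (0:ℝ) < 2), ht, mul_comm,
        div_mul_cancel₀ _ (ne_of_gt hlog2pos)]
      exact Real.exp_log hspos
    have haR : (a : ℝ) ≤ s := by
      calc (a : ℝ) ≤ ((2 ^ E : ℕ) : ℝ) := by exact_mod_cast prod_nth_le k
        _ = (2 : ℝ) ^ (E : ℝ) := by push_cast; rw [Real.rpow_natCast]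
        _ ≤ (2 : ℝ) ^ (t : ℝ) := Real.rpow_le_rpow_of_exponent_le (by norm_num) hEt
        _ = s := h2t
    clear_value E a
    have haa : a * a ≤ Δ.natAbs := by
      have h1 : ((a * a : ℕ) : ℝ) ≤ (Δ.natAbs : ℝ) := by
        push_cast
        nlinarith [haR, (Nat.cast_nonneg a : (0:ℝ) ≤ (a:ℝ)), hs2]
      exact_mod_cast h1
    have hF : 2 ^ k ≤ Fmax Δ := by
      have := le_Fmax Δ ha1 haa
      rwa [ha, omega_prod k] at this
    have hFr : ((2 : ℝ) ^ k) ≤ (Fmax Δ : ℝ) := by exact_mod_cast hF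
    clear hF
    have hLt : Real.log (Real.log s) ≤ Real.log t := Real.log_le_log (by linarith) hlst
    have hlt2 : Real.log t ≤ 2 * Real.sqrt t - 2 := by
      have h1 : Real.log t = 2 * Real.log (Real.sqrt t) := by
        rw [Real.log_sqrt htpos]; ring
      have h2 : Real.log (Real.sqrt t) ≤ Real.sqrt t - 1 :=
        Real.log_le_sub_one_of_pos (Real.sqrt_pos.mpr (by linarith))
      linarith
    have hsk : Real.sqrt t < (k : ℝ) + 1 := by
      rw [Real.sqrt_lt' (by positivity)]
      exact htk1
    have h37 : (37.08 : ℝ) * k ≤ 2 ^ k := pow_big' hk10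
    linarith
end
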